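/- For the path P_n on n ≥ 4 vertices, the τ-index is τ(P_n) = (7n−6)/(3n) if n ≡ 0 (mod 3), τ(P_n) = (7n−5)/(3n) if n ≡ 2 (mod 3) (i.e. n = 3t−1), and τ(P_n) = (7n−4)/(3n) if n ≡ 1 (mod 3) (i.e. n = 3t−2). -/

import Mathlib

open SimpleGraph Function

/-- A Thue colouring of a simple graph `G`: a proper vertex colouring such that the
colour sequence along any path (here: the support of a path-walk) is non-repetitive,
i.e. it is never a square `l ++ l` with `l` nonempty. -/
def IsThueColoring {V α : Type*} (G : SimpleGraph V) (φ : V → α) : Prop :=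
  (∀ ⦃a b : V⦄, G.Adj a b → φ a ≠ φ b) ∧
  ∀ ⦃a b : V⦄ (p : G.Walk a b), p.IsPath →
    ∀ l : List α, l ≠ [] → p.support.map φ ≠ l ++ l

/-- The Thue chromatic number `π(G)`: the least number of colours admitting a Thue
colouring of `G`. -/
noncomputable def thueNumber {V : Type*} (G : SimpleGraph V) : ℕ :=
  sInf {k | ∃ φ : V → Fin k, IsThueColoring G φ}
/-- `l` is an ordering (a listing without repetition) of the edges of `G`. -/
def IsEdgeOrdering {V : Type*} (G : SimpleGraph V) (l : List (Sym2 V)) : Prop :=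
  l.Nodup ∧ ∀ e, e ∈ l ↔ e ∈ G.edgeSet

/-- The τ-value of an edge ordering: the average `(1/(ε+1)) Σ_{i=0}^{ε} π(G*ᵢ)` of the
Thue numbers of the graphs obtained by successively deleting the edges in order. -/
noncomputable def tauValue {V : Type*} (G : SimpleGraph V) (l : List (Sym2 V)) : ℝ :=
  (∑ i ∈ Finset.range (l.length + 1),
    (thueNumber (G.deleteEdges {e | e ∈ l.take i}) : ℝ)) / (l.length + 1)

/-- The τ-index of a graph: the minimum τ-value over all orderings of its edges. -/
noncomputable def tauIndex {V : Type*} (G : SimpleGraph V) : ℝ :=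
  sInf {x | ∃ l : List (Sym2 V), IsEdgeOrdering G l ∧ tauValue G l = x}

/-!
Every subgraph of a path is Thue 3-colourable, by the square-free ternary word of first
differences of the Thue–Morse sequence (which is overlap-free). Conversely `π ≥ 2` as soon as an
edge is left and `π ≥ 3` as soon as a path with three edges is left, since with two colours a
proper colouring of `a b c d` reads `x y x y`. After deleting `i` edges of `P_{m+1}`, some edge
survives if `i < m`, and one of the `⌊m/3⌋` disjoint three-edge subpaths survives if
`i < ⌊m/3⌋`. Deleting the edges `3g + 2` first attains these bounds: what is left splits into
paths on at most three vertices, which are Thue 2-colourable. Hence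
`τ(P_{m+1}) = (3⌊m/3⌋ + 2(m - ⌊m/3⌋) + 1) / (m + 1)`.
-/

def thueMorse : ℕ → Bool := fun n =>
  if h : n = 0 then false else xor (decide (n % 2 = 1)) (thueMorse (n / 2))
decreasing_by exact Nat.div_lt_self (Nat.pos_of_ne_zero h) one_lt_two

theorem thueMorse_two_mul (n : ℕ) : thueMorse (2 * n) = thueMorse n := by
  rcases Nat.eq_zero_or_pos n with rfl | hn
  · rfl
  · rw [thueMorse]
    simp [show 2 * n ≠ 0 by omega]

theorem thueMorse_two_mul_add_one (n : ℕ) : thueMorse (2 * n + 1) = !thueMorse n := by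
  rw [thueMorse]
  simp [show (2 * n + 1) % 2 = 1 by omega, show (2 * n + 1) / 2 = n by omega]

theorem thueMorse_not_three_eq (k : ℕ) :
    ¬ (thueMorse k = thueMorse (k + 1) ∧ thueMorse (k + 1) = thueMorse (k + 2)) := by
  rintro ⟨h₁, h₂⟩
  obtain ⟨m, rfl | rfl⟩ := Nat.even_or_odd' k
  · rw [thueMorse_two_mul, thueMorse_two_mul_add_one] at h₁
    cases thueMorse m <;> simp at h₁
  · rw [show 2 * m + 1 + 1 = 2 * (m + 1) by ring, show 2 * m + 1 + 2 = 2 * (m + 1) + 1 by ring,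
      thueMorse_two_mul, thueMorse_two_mul_add_one] at h₂
    cases thueMorse (m + 1) <;> simp at h₂

/-- Overlap-freeness: no factor `x w x w x` with `x` a letter. -/
theorem thueMorse_overlapFree {p : ℕ} (hp : 0 < p) (j : ℕ) :
    ¬ ∀ m, j ≤ m → m ≤ j + p → thueMorse m = thueMorse (m + p) := by
  induction p using Nat.strong_induction_on generalizing j with
  | _ p ih =>
  intro H
  obtain ⟨q, rfl | rfl⟩ := Nat.even_or_odd' p
  · -- an overlap of period `2q` restricts to one of period `q` on the even or the odd positions
    obtain ⟨b, rfl | rfl⟩ := Nat.even_or_odd' j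
    · refine ih q (by omega) (by omega) b fun m h₁ h₂ => ?_
      simpa [← mul_add, thueMorse_two_mul] using H (2 * m) (by omega) (by omega)
    · refine ih q (by omega) (by omega) b fun m h₁ h₂ => ?_
      have := H (2 * m + 1) (by omega) (by omega)
      rwa [show 2 * m + 1 + 2 * q = 2 * (m + q) + 1 by ring, thueMorse_two_mul_add_one,
        thueMorse_two_mul_add_one, Bool.not_inj_iff] at this
  · rcases Nat.eq_zero_or_pos q with rfl | hq
    · exact thueMorse_not_three_eq j ⟨H j le_rfl (by omega), H (j + 1) (by omega) le_rfl⟩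
    -- an odd period forces equal letters at `a, a + 1` whenever `2a, 2a + 2` lie in the window
    have step : ∀ a, j ≤ 2 * a → 2 * a + 2 ≤ j + (2 * q + 1) →
        thueMorse a = thueMorse (a + 1) := by
      intro a h₁ h₂
      have e₁ := H (2 * a + 1) (by omega) (by omega)
      have e₂ := H (2 * (a + 1)) (by omega) (by omega)
      rw [show 2 * a + 1 + (2 * q + 1) = 2 * (a + q + 1) by ring, thueMorse_two_mul_add_one,
        thueMorse_two_mul] at e₁
      rw [show 2 * (a + 1) + (2 * q + 1) = 2 * (a + q + 1) + 1 by ring, thueMorse_two_mul,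
        thueMorse_two_mul_add_one, ← e₁, Bool.not_not] at e₂
      exact e₂.symm
    set a := (j + 1) / 2
    rcases Nat.eq_or_lt_of_le hq with rfl | hq2
    · have e := H (2 * a) (by omega) (by omega)
      rw [show 2 * a + (2 * 1 + 1) = 2 * (a + 1) + 1 by ring, thueMorse_two_mul,
        thueMorse_two_mul_add_one, step a (by omega) (by omega)] at e
      cases thueMorse (a + 1) <;> simp at e
    · exact thueMorse_not_three_eq a
        ⟨step a (by omega) (by omega), step (a + 1) (by omega) (by omega)⟩

/-- The first differences of the Thue–Morse sequence, coded in three letters. -/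
def thueWord (j : ℕ) : Fin 3 :=
  if thueMorse j = thueMorse (j + 1) then 0 else if thueMorse j then 1 else 2

theorem xor_thueMorse_succ_eq_of_thueWord_eq {j j' : ℕ} (h : thueWord j = thueWord j') :
    xor (thueMorse (j + 1)) (thueMorse (j' + 1)) = xor (thueMorse j) (thueMorse j') := by
  unfold thueWord at h
  revert h
  cases thueMorse j <;> cases thueMorse (j + 1) <;> cases thueMorse j' <;>
    cases thueMorse (j' + 1) <;> decide

theorem thueMorse_eq_of_thueWord_eq {j j' : ℕ} (h : thueWord j = thueWord j')
    (hj : thueMorse j ≠ thueMorse (j + 1)) : thueMorse j = thueMorse j' := by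
  unfold thueWord at h
  revert h hj
  cases thueMorse j <;> cases thueMorse (j + 1) <;> cases thueMorse j' <;>
    cases thueMorse (j' + 1) <;> decide

theorem thueWord_squarefree {p : ℕ} (hp : 0 < p) (i : ℕ) :
    ¬ ∀ k < p, thueWord (i + k) = thueWord (i + p + k) := by
  intro h
  -- equal letters mean equal steps of `thueMorse`, so the `xor` below does not depend on `k`
  have hconst : ∀ k ≤ p, xor (thueMorse (i + k)) (thueMorse (i + p + k)) =
      xor (thueMorse i) (thueMorse (i + p)) := by
    intro k hk
    induction k with
    | zero => rfl
    | succ k ih =>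
      rw [← ih (by omega), ← xor_thueMorse_succ_eq_of_thueWord_eq (h k (by omega))]
      rfl
  cases he : xor (thueMorse i) (thueMorse (i + p))
  · refine thueMorse_overlapFree hp i fun m h₁ h₂ => ?_
    have := hconst (m - i) (by omega)
    rw [he, show i + p + (m - i) = m + p by omega, show i + (m - i) = m by omega] at this
    simpa using this
  · -- the two halves disagree everywhere, so the first half is constant, against `no three equal`
    have hflat : ∀ k < p, thueMorse (i + k) = thueMorse (i + k + 1) := by
      intro k hk
      by_contra hne
      have := hconst k hk.le
      rw [thueMorse_eq_of_thueWord_eq (h k hk) hne, Bool.xor_self, he] at this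
      exact Bool.false_ne_true this
    obtain rfl | hp2 : p = 1 ∨ 1 < p := by omega
    · exact Bool.xor_iff_ne.mp he (hflat 0 one_pos)
    · exact thueMorse_not_three_eq i ⟨hflat 0 hp, hflat 1 hp2⟩

theorem thueWord_succ_ne (j : ℕ) : thueWord j ≠ thueWord (j + 1) :=
  fun h => thueWord_squarefree one_pos j fun k hk => by
    rwa [Nat.lt_one_iff.mp hk]

theorem isChain_succ_or_isChain_pred_of_nodup :
    ∀ {L : List ℕ}, L.Nodup → L.IsChain (fun a b => a + 1 = b ∨ b + 1 = a) →
      L.IsChain (fun a b => a + 1 = b) ∨ L.IsChain (fun a b => b + 1 = a)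
  | [], _, _ | [_], _, _ => .inl (by simp)
  | [_, _], _, h => by simpa using h
  | x :: y :: z :: L, hnd, h => by
    rw [List.isChain_cons_cons] at h
    have hxz : x ≠ z := by simp_all
    rcases isChain_succ_or_isChain_pred_of_nodup hnd.of_cons h.2 with hup | hdown
    · have := (List.isChain_cons_cons.mp hup).1
      exact .inl (List.isChain_cons_cons.mpr ⟨by omega, hup⟩)
    · have := (List.isChain_cons_cons.mp hdown).1
      exact .inr (List.isChain_cons_cons.mpr ⟨by omega, hdown⟩)

theorem eq_range'_of_isChain_succ :
    ∀ {L : List ℕ}, L.IsChain (fun a b => a + 1 = b) → ∃ a, L = List.range' a L.length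
  | [], _ => ⟨0, rfl⟩
  | [x], _ => ⟨x, rfl⟩
  | x :: y :: L, h => by
    rw [List.isChain_cons_cons] at h
    obtain ⟨a, ha⟩ := eq_range'_of_isChain_succ h.2
    obtain rfl : a = y := by
      rw [List.length_cons, List.range'_succ] at ha
      exact (List.cons_eq_cons.mp ha).1.symm
    refine ⟨x, ?_⟩
    rw [List.length_cons, List.range'_succ, h.1, ← ha]

theorem thueWord_map_range'_ne_square (a m : ℕ) {l : List (Fin 3)} (hl : l ≠ []) :
    (List.range' a m).map thueWord ≠ l ++ l := by
  intro h
  have hm : m = l.length + l.length := by simpa using congrArg List.length h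
  refine thueWord_squarefree (List.length_pos_iff.mpr hl) a fun k hk => ?_
  subst hm
  have e₁ : thueWord (a + k) = l[k] := by
    simpa [List.getElem?_range' (show k < l.length + l.length by omega),
      List.getElem?_append_left hk, hk] using congrArg (·[k]?) h
  have e₂ : thueWord (a + l.length + k) = l[k] := by
    simpa [add_assoc, hk] using congrArg (·[l.length + k]?) h
  rw [e₁, e₂]

theorem card_filter_mem_le_length {ι β : Type*} [Fintype ι] [DecidableEq β] {f : ι → β}
    (hf : Injective f) (l : List β) : (Finset.univ.filter fun j => f j ∈ l).card ≤ l.length :=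
  (Finset.card_le_card_of_injOn f (fun j hj => by simpa using hj) hf.injOn).trans
    (List.toFinset_card_le l)

theorem exists_lt_forall_ne_of_card_lt {ι : Type*} {s : Finset ι} (f : ι → ℕ) {b : ℕ}
    (h : s.card < b) : ∃ g < b, ∀ j ∈ s, f j ≠ g := by
  classical
  obtain ⟨g, hg, hgs⟩ := Finset.exists_mem_notMem_of_card_lt_card
    ((Finset.card_image_le (f := f)).trans_lt (h.trans_eq (Finset.card_range b).symm))
  exact ⟨g, Finset.mem_range.mp hg, fun j hj hjg => hgs (Finset.mem_image.mpr ⟨j, hj, hjg⟩)⟩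

section ThueColoring

variable {V α : Type*} {G H : SimpleGraph V}

theorem IsThueColoring.mono {φ : V → α} (hφ : IsThueColoring G φ) (hle : H ≤ G) :
    IsThueColoring H φ := by
  refine ⟨fun a b hab => hφ.1 (hle hab), fun a b p hp l hl => ?_⟩
  have hsub : ∀ e ∈ p.edges, e ∈ G.edgeSet :=
    fun e he => edgeSet_mono hle (p.edges_subset_edgeSet he)
  simpa using hφ.2 (p.transfer G hsub) (hp.transfer hsub) l hl

/-- In a graph without paths of three edges, the only possible square is one edge with equal
colours at both ends. -/
theorem isThueColoring_of_forall_isPath_length_le_two {φ : V → α}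
    (hproper : ∀ ⦃a b : V⦄, G.Adj a b → φ a ≠ φ b)
    (hshort : ∀ ⦃a b : V⦄ (p : G.Walk a b), p.IsPath → p.length ≤ 2) :
    IsThueColoring G φ := by
  refine ⟨hproper, fun a b p hp l hl hsq => ?_⟩
  have hlen := congrArg List.length hsq
  simp only [List.length_map, Walk.length_support, List.length_append] at hlen
  have := hshort p hp
  have := List.length_pos_iff.mpr hl
  obtain ⟨c, rfl⟩ : ∃ c, l = [c] := List.length_eq_one_iff.mp (by omega)
  cases p with
  | nil => simp at hlen
  | cons hab q =>
    cases q with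
    | nil =>
      have hc : φ a = c ∧ φ b = c := by simpa using hsq
      exact hproper hab (hc.1.trans hc.2.symm)
    | cons _ r => simp at hlen

theorem thueNumber_le {k : ℕ} (φ : V → Fin k) (hφ : IsThueColoring G φ) : thueNumber G ≤ k :=
  Nat.sInf_le ⟨φ, hφ⟩

theorem le_thueNumber {k c : ℕ} (φ : V → Fin c) (hφ : IsThueColoring G φ)
    (h : ∀ c' (ψ : V → Fin c'), IsThueColoring G ψ → k ≤ c') : k ≤ thueNumber G :=
  le_csInf ⟨c, φ, hφ⟩ fun c' ⟨ψ, hψ⟩ => h c' ψ hψ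

theorem thueNumber_bot_le_one : thueNumber (⊥ : SimpleGraph V) ≤ 1 :=
  thueNumber_le (fun _ => 0) <| isThueColoring_of_forall_isPath_length_le_two
    (fun _ _ h => h.elim) fun _ _ p _ => by cases p with
      | nil => simp
      | cons h _ => exact h.elim

theorem IsThueColoring.two_le {k : ℕ} {φ : V → Fin k} (hφ : IsThueColoring G φ) {a b : V}
    (hab : G.Adj a b) : 2 ≤ k := by
  have := Fin.val_injective.ne (hφ.1 hab)
  omega

/-- With two colours a properly coloured path `a b c d` reads `x y x y`. -/
theorem IsThueColoring.three_le {k : ℕ} {φ : V → Fin k} (hφ : IsThueColoring G φ)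
    {a b c d : V} (hab : G.Adj a b) (hbc : G.Adj b c) (hcd : G.Adj c d)
    (hac : a ≠ c) (had : a ≠ d) (hbd : b ≠ d) : 3 ≤ k := by
  by_contra! hk
  have h₁ := Fin.val_injective.ne (hφ.1 hab)
  have h₂ := Fin.val_injective.ne (hφ.1 hbc)
  have h₃ := Fin.val_injective.ne (hφ.1 hcd)
  have hφac : φ a = φ c := Fin.ext (by omega)
  have hφbd : φ b = φ d := Fin.ext (by omega)
  let p : G.Walk a d := .cons hab (.cons hbc (.cons hcd .nil))
  have hp : p.IsPath := by
    simp [p, Walk.isPath_def, hab.ne, hbc.ne, hcd.ne, hac, had, hbd]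
  exact hφ.2 p hp [φ a, φ b] (by simp) (by simp [p, hφac, hφbd])

end ThueColoring

section PathGraph

variable {n : ℕ}

theorem isThueColoring_pathGraph_thueWord (n : ℕ) :
    IsThueColoring (pathGraph n) (fun v => thueWord v.val) := by
  refine ⟨fun a b hab => ?_, fun a b p hp l hl hsq => ?_⟩
  · rcases pathGraph_adj.mp hab with h | h
    · simpa [← h] using thueWord_succ_ne a.val
    · simpa [← h] using (thueWord_succ_ne b.val).symm
  -- the vertices of a path in `P_n` form an interval, traversed upwards or downwards
  set L := p.support.map Fin.val
  have hchain : L.IsChain (fun a b => a + 1 = b ∨ b + 1 = a) :=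
    List.isChain_map_of_isChain Fin.val (fun _ _ => pathGraph_adj.mp) p.isChain_adj_support
  have hsq' : L.map thueWord = l ++ l := by rw [List.map_map]; exact hsq
  rcases isChain_succ_or_isChain_pred_of_nodup (hp.support_nodup.map Fin.val_injective)
    hchain with hup | hdown
  · obtain ⟨c, hc⟩ := eq_range'_of_isChain_succ hup
    exact thueWord_map_range'_ne_square c _ hl (by rw [← hc]; exact hsq')
  · obtain ⟨c, hc⟩ := eq_range'_of_isChain_succ (List.isChain_reverse.mpr hdown)
    refine thueWord_map_range'_ne_square c L.reverse.length (l := l.reverse) (by simpa using hl) ?_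
    rw [← hc, List.map_reverse, hsq', List.reverse_append]

theorem thueNumber_le_three_of_le_pathGraph {G : SimpleGraph (Fin n)} (hle : G ≤ pathGraph n) :
    thueNumber G ≤ 3 :=
  thueNumber_le _ ((isThueColoring_pathGraph_thueWord n).mono hle)

theorem SimpleGraph.Walk.IsPath.length_le_two_of_adj_div_three {G : SimpleGraph (Fin n)}
    (hG : ∀ ⦃a b⦄, G.Adj a b → a.val / 3 = b.val / 3) {u v : Fin n} {p : G.Walk u v}
    (hp : p.IsPath) : p.length ≤ 2 := by
  have hblock : ∀ {x y : Fin n} (q : G.Walk x y), ∀ z ∈ q.support, z.val / 3 = x.val / 3 := by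
    intro x y q
    induction q with
    | nil => simp
    | cons hxy q ih =>
      intro z hz
      rcases List.mem_cons.mp (Walk.support_cons _ _ ▸ hz) with rfl | hz
      · rfl
      · exact (ih z hz).trans (hG hxy).symm
  have hsub : (p.support.map Fin.val).toFinset ⊆
      Finset.Ico (3 * (u.val / 3)) (3 * (u.val / 3) + 3) := by
    intro x hx
    obtain ⟨z, hz, rfl⟩ := List.mem_map.mp (List.mem_toFinset.mp hx)
    have := hblock p z hz
    simp only [Finset.mem_Ico]
    omega
  have := Finset.card_le_card hsub
  rw [List.toFinset_card_of_nodup (hp.support_nodup.map Fin.val_injective), List.length_map,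
    Walk.length_support, Nat.card_Ico] at this
  omega

theorem thueNumber_le_two_of_adj_div_three {G : SimpleGraph (Fin n)} (hle : G ≤ pathGraph n)
    (hG : ∀ ⦃a b⦄, G.Adj a b → a.val / 3 = b.val / 3) : thueNumber G ≤ 2 := by
  refine thueNumber_le (fun v => ⟨v.val % 3 % 2, by omega⟩)
    (isThueColoring_of_forall_isPath_length_le_two (fun a b hab => ?_)
      fun _ _ _ hp => hp.length_le_two_of_adj_div_three hG)
  have := hG hab
  rw [Ne, Fin.mk.injEq]
  rcases pathGraph_adj.mp (hle hab) with h | h <;> omega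

end PathGraph

section PathEdges

variable {m : ℕ}

def pathEdge (j : Fin m) : Sym2 (Fin (m + 1)) := s(j.castSucc, j.succ)

theorem pathEdge_injective : Injective (pathEdge (m := m)) := by
  intro j j' h
  rcases Sym2.eq_iff.mp h with ⟨h₁, -⟩ | ⟨h₁, h₂⟩
  · exact Fin.castSucc_injective _ h₁
  · have e₁ := congrArg Fin.val h₁
    have e₂ := congrArg Fin.val h₂
    simp only [Fin.val_castSucc, Fin.val_succ] at e₁ e₂
    omega

theorem sym2_eq_pathEdge {a b : Fin (m + 1)} (h : a.val + 1 = b.val) :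
    s(a, b) = pathEdge ⟨a.val, by omega⟩ := by
  rw [pathEdge]
  congr 1
  ext
  simp [h]

theorem edgeSet_pathGraph : (pathGraph (m + 1)).edgeSet = Set.range pathEdge := by
  ext e
  induction e using Sym2.ind with
  | _ a b =>
  constructor
  · intro h
    rcases pathGraph_adj.mp h with h | h
    · exact ⟨_, (sym2_eq_pathEdge h).symm⟩
    · exact ⟨_, (Sym2.eq_swap.trans (sym2_eq_pathEdge h)).symm⟩
  · rintro ⟨j, hj⟩
    rw [← hj, pathEdge, mem_edgeSet, pathGraph_adj]
    simp

theorem ncard_edgeSet_pathGraph : (pathGraph (m + 1)).edgeSet.ncard = m := by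
  rw [edgeSet_pathGraph, Set.ncard_range_of_injective pathEdge_injective, Nat.card_eq_fintype_card,
    Fintype.card_fin]

theorem adj_deleteEdges_castSucc_succ {S : Set (Sym2 (Fin (m + 1)))} {j : Fin m}
    (h : pathEdge j ∉ S) : ((pathGraph (m + 1)).deleteEdges S).Adj j.castSucc j.succ := by
  rw [deleteEdges_adj, pathGraph_adj]
  exact ⟨.inl (by simp), h⟩

end PathEdges

section TauIndex

variable {V : Type*} {G : SimpleGraph V}

theorem IsEdgeOrdering.length_eq {l : List (Sym2 V)} (hl : IsEdgeOrdering G l) :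
    l.length = G.edgeSet.ncard := by
  classical
  have : G.edgeSet = ↑l.toFinset := by ext e; simp [hl.2 e]
  rw [this, Set.ncard_coe_finset, List.toFinset_card_of_nodup hl.1]

theorem tauIndex_eq_of_le_of_exists_le (f : ℕ → ℕ)
    (hlow : ∀ l, IsEdgeOrdering G l → ∀ i ≤ G.edgeSet.ncard,
      f i ≤ thueNumber (G.deleteEdges {e | e ∈ l.take i}))
    (hopt : ∃ l, IsEdgeOrdering G l ∧ ∀ i ≤ G.edgeSet.ncard,
      thueNumber (G.deleteEdges {e | e ∈ l.take i}) ≤ f i) :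
    tauIndex G =
      (∑ i ∈ Finset.range (G.edgeSet.ncard + 1), (f i : ℝ)) / (G.edgeSet.ncard + 1) := by
  obtain ⟨l₀, hl₀, hle⟩ := hopt
  refine IsLeast.csInf_eq ⟨⟨l₀, hl₀, ?_⟩, ?_⟩
  · rw [tauValue, hl₀.length_eq]
    congr 1
    refine Finset.sum_congr rfl fun i hi => ?_
    exact_mod_cast le_antisymm (hle i (by simpa [Nat.lt_succ_iff] using hi))
      (hlow l₀ hl₀ i (by simpa [Nat.lt_succ_iff] using hi))
  · rintro _ ⟨l, hl, rfl⟩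
    rw [tauValue, hl.length_eq]
    gcongr with i hi
    exact_mod_cast hlow l hl i (by simpa [Nat.lt_succ_iff] using hi)

end TauIndex

section PathProfile

variable {m : ℕ}

/-- The values of `π(P*ᵢ)` along an optimal ordering of the `m` edges of `P_{m+1}`. -/
def pathProfile (m i : ℕ) : ℕ := if i < m / 3 then 3 else if i < m then 2 else 1

theorem sum_pathProfile (m : ℕ) :
    ∑ i ∈ Finset.range (m + 1), pathProfile m i = 2 * m + 1 + m / 3 := by
  rw [Finset.sum_range_succ, ← Finset.sum_range_add_sum_Ico _ (Nat.div_le_self m 3)]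
  have h₃ : ∑ i ∈ Finset.range (m / 3), pathProfile m i = ∑ i ∈ Finset.range (m / 3), 3 :=
    Finset.sum_congr rfl fun i hi => if_pos (Finset.mem_range.mp hi)
  have h₂ : ∑ i ∈ Finset.Ico (m / 3) m, pathProfile m i = ∑ i ∈ Finset.Ico (m / 3) m, 2 :=
    Finset.sum_congr rfl fun i hi => by
      rw [Finset.mem_Ico] at hi
      rw [pathProfile, if_neg hi.1.not_gt, if_pos hi.2]
  rw [h₃, h₂, pathProfile, if_neg (by omega), if_neg (lt_irrefl m)]
  simp only [Finset.sum_const, Finset.card_range, Nat.card_Ico, smul_eq_mul]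
  omega

/-- Deleting `i < m` edges leaves an edge, and deleting `i < m / 3` edges leaves one of the
`m / 3` disjoint paths of three edges `3g, 3g + 1, 3g + 2` intact. -/
theorem pathProfile_le_thueNumber (l : List (Sym2 (Fin (m + 1)))) (i : ℕ) :
    pathProfile m i ≤ thueNumber ((pathGraph (m + 1)).deleteEdges {e | e ∈ l.take i}) := by
  set G := (pathGraph (m + 1)).deleteEdges {e | e ∈ l.take i}
  have hcol : IsThueColoring G _ := (isThueColoring_pathGraph_thueWord (m + 1)).mono
    (deleteEdges_le _)
  set D := Finset.univ.filter fun j : Fin m => pathEdge j ∈ l.take i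
  have hD : D.card ≤ i :=
    (card_filter_mem_le_length pathEdge_injective _).trans (List.length_take_le _ _)
  refine le_thueNumber _ hcol fun c φ hφ => ?_
  unfold pathProfile
  split_ifs with h₃ h₂
  · obtain ⟨g, hg, hgD⟩ :=
      exists_lt_forall_ne_of_card_lt (fun j : Fin m => j.val / 3) (hD.trans_lt h₃)
    have hsurv : ∀ r < 3, ∀ hr : 3 * g + r < m,
        G.Adj ⟨3 * g + r, by omega⟩ ⟨3 * g + r + 1, by omega⟩ :=
      fun r hr hr' => adj_deleteEdges_castSucc_succ (j := ⟨3 * g + r, hr'⟩) fun hmem =>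
        hgD _ (by simpa [D] using hmem) (show (3 * g + r) / 3 = g by omega)
    exact hφ.three_le (hsurv 0 (by omega) (by omega)) (hsurv 1 (by omega) (by omega))
      (hsurv 2 (by omega) (by omega)) (by simp +arith) (by simp +arith) (by simp +arith)
  · obtain ⟨j, -, hj⟩ := Finset.exists_mem_notMem_of_card_lt_card
      (hD.trans_lt (h₂.trans_eq (Finset.card_fin m).symm))
    exact hφ.two_le (adj_deleteEdges_castSucc_succ (j := j) (by simpa [D] using hj))
  · exact Fin.pos (φ 0)

end PathProfile

section OptimalOrdering

variable {m : ℕ}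

theorem isEdgeOrdering_map_pathEdge {L : List (Fin m)} (hnd : L.Nodup) (hall : ∀ j, j ∈ L) :
    IsEdgeOrdering (pathGraph (m + 1)) (L.map pathEdge) :=
  ⟨hnd.map pathEdge_injective, fun e => by simp [edgeSet_pathGraph, hall]⟩

/-- The edge `3g + 2`, which separates the `g`-th block `{3g, 3g+1, 3g+2}` from the next. -/
def cutIndex (g : Fin (m / 3)) : Fin m := ⟨3 * g + 2, by omega⟩

/-- Delete the cut edges first, splitting `P_{m+1}` into paths of at most three vertices. -/
def optimalOrder (m : ℕ) : List (Fin m) :=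
  (List.finRange (m / 3)).map cutIndex ++ (List.finRange m).filter fun j => j.val % 3 ≠ 2

theorem mem_map_cutIndex {j : Fin m} (hj : j.val % 3 = 2) :
    j ∈ (List.finRange (m / 3)).map cutIndex :=
  List.mem_map.mpr
    ⟨⟨j / 3, by omega⟩, List.mem_finRange _, Fin.ext (show 3 * (j.val / 3) + 2 = j.val by omega)⟩

theorem nodup_optimalOrder : (optimalOrder m).Nodup := by
  refine List.Nodup.append ((List.nodup_finRange _).map fun g g' h => ?_)
    ((List.nodup_finRange _).filter _) ?_
  · have := congrArg Fin.val h
    simp only [cutIndex] at this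
    omega
  · intro j hj hj'
    obtain ⟨g, -, rfl⟩ := List.mem_map.mp hj
    simp [cutIndex] at hj'

theorem mem_optimalOrder (j : Fin m) : j ∈ optimalOrder m := by
  by_cases hj : j.val % 3 = 2
  · exact List.mem_append_left _ (mem_map_cutIndex hj)
  · exact List.mem_append_right _ (List.mem_filter.mpr ⟨List.mem_finRange _, by simpa using hj⟩)

theorem isEdgeOrdering_optimalOrder :
    IsEdgeOrdering (pathGraph (m + 1)) ((optimalOrder m).map pathEdge) :=
  isEdgeOrdering_map_pathEdge nodup_optimalOrder mem_optimalOrder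

theorem pathEdge_mem_take_optimalOrder {i : ℕ} (hi : m / 3 ≤ i) {j : Fin m}
    (hj : j.val % 3 = 2) : pathEdge j ∈ ((optimalOrder m).map pathEdge).take i := by
  rw [← List.map_take, optimalOrder, List.take_append, List.take_of_length_le (by simpa using hi)]
  exact List.mem_map_of_mem (List.mem_append_left _ (mem_map_cutIndex hj))

theorem thueNumber_optimalOrder_le_pathProfile {i : ℕ} (hi : i ≤ m) :
    thueNumber ((pathGraph (m + 1)).deleteEdges
      {e | e ∈ ((optimalOrder m).map pathEdge).take i}) ≤ pathProfile m i := by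
  unfold pathProfile
  split_ifs with h₃ h₂
  · exact thueNumber_le_three_of_le_pathGraph (deleteEdges_le _)
  · -- all cut edges are gone, so every remaining edge lies inside a block
    have hblock : ∀ a b : Fin (m + 1), a.val + 1 = b.val →
        s(a, b) ∉ ((optimalOrder m).map pathEdge).take i → a.val / 3 = b.val / 3 := by
      intro a b h hab
      by_contra hne
      exact hab (sym2_eq_pathEdge h ▸
        pathEdge_mem_take_optimalOrder (not_lt.mp h₃) (show a.val % 3 = 2 by omega))
    refine thueNumber_le_two_of_adj_div_three (deleteEdges_le _) fun a b hab => ?_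
    obtain ⟨hadj, hab⟩ := deleteEdges_adj.mp hab
    rcases pathGraph_adj.mp hadj with h | h
    · exact hblock a b h hab
    · exact (hblock b a h (Sym2.eq_swap ▸ hab)).symm
  · have hlen : ((optimalOrder m).map pathEdge).length ≤ i := by
      rw [isEdgeOrdering_optimalOrder.length_eq, ncard_edgeSet_pathGraph]
      omega
    have hbot : (pathGraph (m + 1)).deleteEdges {e | e ∈ (optimalOrder m).map pathEdge} = ⊥ :=
      deleteEdges_eq_bot.mpr fun e he => (isEdgeOrdering_optimalOrder.2 e).mpr he
    rw [List.take_of_length_le hlen, hbot]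
    exact thueNumber_bot_le_one

end OptimalOrdering

theorem tauIndex_pathGraph_succ (m : ℕ) :
    tauIndex (pathGraph (m + 1)) = ((2 * m + 1 + m / 3 : ℕ) : ℝ) / (m + 1) := by
  rw [tauIndex_eq_of_le_of_exists_le (pathProfile m)
    (fun l _ i _ => pathProfile_le_thueNumber l i) ⟨_, isEdgeOrdering_optimalOrder, fun i hi =>
      thueNumber_optimalOrder_le_pathProfile (ncard_edgeSet_pathGraph (m := m) ▸ hi)⟩,
    ncard_edgeSet_pathGraph, ← sum_pathProfile m, Nat.cast_sum]

/-- the τ-index of the path `P_n`, `n ≥ 4`, according to the residue of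
`n` modulo `3`. -/
theorem tauIndex_pathGraph (n : ℕ) (hn : 4 ≤ n) :
    (n % 3 = 0 → tauIndex (pathGraph n) = (7 * n - 6) / (3 * n)) ∧
    (n % 3 = 2 → tauIndex (pathGraph n) = (7 * n - 5) / (3 * n)) ∧
    (n % 3 = 1 → tauIndex (pathGraph n) = (7 * n - 4) / (3 * n)) := by
  obtain ⟨m, rfl⟩ : ∃ m, n = m + 1 := ⟨n - 1, by omega⟩
  have key : ∀ c : ℕ, 3 * (2 * m + 1 + m / 3) + c = 7 * (m + 1) →
      tauIndex (pathGraph (m + 1)) = (7 * ((m + 1 : ℕ) : ℝ) - c) / (3 * ((m + 1 : ℕ) : ℝ)) := by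
    intro c hc
    have hc' : (3 * ((2 * m + 1 + m / 3 : ℕ) : ℝ)) = 7 * ((m + 1 : ℕ) : ℝ) - c := by
      rw [eq_sub_iff_add_eq]
      exact_mod_cast hc
    rw [tauIndex_pathGraph_succ, ← hc', Nat.cast_succ, mul_div_mul_left _ _ three_ne_zero]
  exact ⟨fun _ => mod_cast key 6 (by omega), fun _ => mod_cast key 5 (by omega),
    fun _ => mod_cast key 4 (by omega)⟩
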